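/- Let Γ be a layered graph with unique minimal vertex * and every v ∈ V^+ having an outgoing edge. Let τ: FE → FE′ be defined by τ(e) = e(t(e),1) − e(h(e),1), where E′ = {e_v : v ∈ V^+} with e_v the distinguished edge at v and e(v,1) = e_{v^{(0)}} + e_{v^{(1)}} + ⋯ + e_{v^{(|v|−1)}} along the distinguished path from v to *. Then τ is a projection of FE onto FE′ whose kernel is R_1, the degree-1 component of the defining ideal R of A(Γ). -/

import Mathlib

noncomputable section

/-- A layered directed graph: vertices come with a rank (layer), and each
edge goes from a vertex of rank `j+1` to a vertex of rank `j`. -/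
structure LayeredGraph where
  V : Type
  E : Type
  rank : V → ℕ
  tail : E → V
  head : E → V
  rank_tail : ∀ e, rank (tail e) = rank (head e) + 1

namespace LayeredGraph

variable (G : LayeredGraph)

/-- `V₀ = {*}`: there is a unique vertex of rank `0`. -/
def HasUniqueMin : Prop := ∃ s : G.V, G.rank s = 0 ∧ ∀ v, G.rank v = 0 → v = s

/-- Every vertex of `V⁺` has at least one outgoing edge. -/
def EdgeFull : Prop := ∀ v, G.rank v ≠ 0 → ∃ e, G.tail e = v

/-- `u` covers `w`: there is an edge from `u` to `w`. -/
def adj (u w : G.V) : Prop := ∃ e, G.tail e = u ∧ G.head e = w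

/-- `v ≥ u` with a prescribed rank drop `j` (this is `u ∈ S_j(v)`;
for `j = 0` it forces `u = v`). -/
def SRel (v u : G.V) (j : ℕ) : Prop :=
  Relation.ReflTransGen G.adj v u ∧ G.rank u + j = G.rank v

/-- A uniform layered graph: for each vertex `v` of rank `≥ 2`, all elements of
`S₁(v)` are equivalent under the equivalence relation generated by
`u ∼ w ↔ S₁(u) ∩ S₁(w) ≠ ∅`. -/
def Uniform : Prop := ∀ v u w, 2 ≤ G.rank v → G.adj v u → G.adj v w →
  Relation.EqvGen (fun a b => G.adj v a ∧ G.adj v b ∧ ∃ x, G.adj a x ∧ G.adj b x) u w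

/-- A (nonempty) directed path: a nonempty list of composable edges. -/
def IsPathList (l : List G.E) : Prop :=
  l ≠ [] ∧ l.Chain' (fun e f => G.head e = G.tail f)

/-- The tail (initial vertex) of a path, as an `Option`. -/
def firstV (l : List G.E) : Option G.V := l.head?.map G.tail

/-- The head (final vertex) of a path, as an `Option`. -/
def lastV (l : List G.E) : Option G.V := l.getLast?.map G.head

/-- The list `v₀, v₁, …, v_m` of vertices visited by a path. -/
def pathVerts (l : List G.E) : List G.V :=
  match l with
  | [] => []
  | e :: _ => G.tail e :: l.map G.head

/-- The type `V⁺` of vertices of positive rank. -/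
def Vp := {v : G.V // G.rank v ≠ 0}

variable (F : Type) [Field F]

/-- The coefficient `e(π,k)` of `t^k` in `P_π(t) = (1 - te₁)⋯(1 - te_m)`,
an element of the tensor algebra `T(E)` (modelled as the free algebra on `E`). -/
def ecoef (π : List G.E) (k : ℕ) : FreeAlgebra F G.E :=
  ((-1 : F) ^ k) • ((π.sublistsLen k).map fun l => (l.map (FreeAlgebra.ι F)).prod).sum

/-- The two-sided ideal generated by a set, as a submodule. -/
def twoSidedSpan {A : Type} [Ring A] [Algebra F A] (S : Set A) : Submodule F A :=
  Submodule.span F {x | ∃ a s b, s ∈ S ∧ x = a * s * b}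

/-- The defining ideal `R` of `A(Γ)`, generated by the differences
`e(π₁,k) - e(π₂,k)` over pairs of paths with the same tail and the same head. -/
def Rideal : Submodule F (FreeAlgebra F G.E) :=
  twoSidedSpan F {x | ∃ π₁ π₂ k, G.IsPathList π₁ ∧ G.IsPathList π₂ ∧
    G.firstV π₁ = G.firstV π₂ ∧ G.lastV π₁ = G.lastV π₂ ∧
    1 ≤ k ∧ k ≤ π₁.length ∧ x = G.ecoef F π₁ k - G.ecoef F π₂ k}

/-- A vertex viewed in `T(V⁺)` (the free algebra on `V⁺`), with `*` sent to `0`. -/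
def vert (v : G.V) : FreeAlgebra F G.Vp :=
  if h : G.rank v = 0 then 0 else FreeAlgebra.ι F (⟨v, h⟩ : G.Vp)

/-- The algebra homomorphism `θ : T(E) → T(V⁺)`, induced by `e ↦ t(e) - h(e)`. -/
def theta : FreeAlgebra F G.E →ₐ[F] FreeAlgebra F G.Vp :=
  FreeAlgebra.lift F fun e => G.vert F (G.tail e) - G.vert F (G.head e)

/-- The filtration `T(E)_i` of `T(E)`, where an edge `e` has degree `|t(e)|`. -/
def filtE (i : ℕ) : Submodule F (FreeAlgebra F G.E) :=
  Submodule.span F {x | ∃ l : List G.E, (l.map fun e => G.rank (G.tail e)).sum ≤ i ∧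
    x = (l.map (FreeAlgebra.ι F)).prod}

/-- The homogeneous component `T(V⁺)_[i]` of `T(V⁺)`,
where a vertex has degree equal to its rank. -/
def homogV (i : ℕ) : Submodule F (FreeAlgebra F G.Vp) :=
  Submodule.span F {x | ∃ l : List G.Vp, (l.map fun p => G.rank p.1).sum = i ∧
    x = (l.map (FreeAlgebra.ι F)).prod}

/-- The filtration `T(V⁺)_i` of `T(V⁺)` induced by the vertex grading. -/
def filtV (i : ℕ) : Submodule F (FreeAlgebra F G.Vp) :=
  Submodule.span F {x | ∃ l : List G.Vp, (l.map fun p => G.rank p.1).sum ≤ i ∧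
    x = (l.map (FreeAlgebra.ι F)).prod}

/-- The associated graded ideal `gr I` of an ideal `I ⊆ T(V⁺)`: its degree-`k`
component is `T(V⁺)_[k] ∩ (T(V⁺)_{k-1} + I)`. -/
def grIdeal (I : Submodule F (FreeAlgebra F G.Vp)) : Submodule F (FreeAlgebra F G.Vp) :=
  ⨆ k, G.homogV F k ⊓ ((⨆ j, ⨆ _ : j < k, G.homogV F j) ⊔ I)

/-- The monomial `v(π,k) = v₀v₁⋯v_{k-1} ∈ T(V⁺)` attached to a path `π`. -/
def vmon (π : List G.E) (k : ℕ) : FreeAlgebra F G.Vp :=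
  (((G.pathVerts π).take k).map (G.vert F)).prod

/-- The ideal `R_gr ⊆ T(V⁺)`, generated by the differences `v(π₁,k) - v(π₂,k)`
over pairs of paths with common tail. -/
def Rgr : Submodule F (FreeAlgebra F G.Vp) :=
  twoSidedSpan F {x | ∃ π₁ π₂ k, G.IsPathList π₁ ∧ G.IsPathList π₂ ∧
    G.firstV π₁ = G.firstV π₂ ∧ 2 ≤ k ∧ k ≤ π₁.length ∧ k ≤ π₂.length ∧
    x = G.vmon F π₁ k - G.vmon F π₂ k}

/-- The degree-one subspace `V = F·V⁺ ⊆ T(V⁺)`. -/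
def Wone : Submodule F (FreeAlgebra F G.Vp) :=
  Submodule.span F (Set.range (FreeAlgebra.ι F))

/-- The quadratic relation space `R` of `gr A(Γ)`,
spanned by the elements `v(u - w)` with `u, w ∈ S₁(v)`. -/
def Rquad : Submodule F (FreeAlgebra F G.Vp) :=
  Submodule.span F {x | ∃ v u w, G.adj v u ∧ G.adj v w ∧
    x = G.vert F v * (G.vert F u - G.vert F w)}

/-- `S_j(v) = span{u : v > u, |u| = |v| - j}` (with `S₀(v) = span{v}`). -/
def Sspan (j : ℕ) (v : G.V) : Submodule F (FreeAlgebra F G.Vp) :=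
  Submodule.span F {x | ∃ u, G.SRel v u j ∧ x = G.vert F u}

/-- `P_j(v) = span{u - w : v > u, v > w, |u| = |w| = |v| - j}`. -/
def Pspan (j : ℕ) (v : G.V) : Submodule F (FreeAlgebra F G.Vp) :=
  Submodule.span F {x | ∃ u w, G.SRel v u j ∧ G.SRel v w j ∧
    x = G.vert F u - G.vert F w}

end LayeredGraph

/-- The elements of the sublattice generated by a family of subspaces. -/
inductive latGen {α : Type*} [Lattice α] (S : Set α) : α → Prop
  | base {x} : x ∈ S → latGen S x
  | inf {x y} : latGen S x → latGen S y → latGen S (x ⊓ y)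
  | sup {x y} : latGen S x → latGen S y → latGen S (x ⊔ y)

/-- A family of elements of a lattice is distributive if the sublattice
it generates is distributive. -/
def IsDistribFamily {α : Type*} [Lattice α] (S : Set α) : Prop :=
  ∀ x y z, latGen S x → latGen S y → latGen S z → x ⊓ (y ⊔ z) = (x ⊓ y) ⊔ (x ⊓ z)

/-- Backelin's criterion: a quadratic algebra `T(V)/(R)` (given by the degree-one
subspace `V` and the relation space `R ⊆ V⊗V` inside the tensor algebra) is Koszul
iff for each `k` the collection of subspaces `V^i R V^(k-i)` generates a
distributive lattice. -/
def IsKoszulQuad (F : Type) [Field F] {A : Type} [Ring A] [Algebra F A]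
    (W R : Submodule F A) : Prop :=
  ∀ k : ℕ, IsDistribFamily {X | ∃ i ≤ k, X = W ^ i * R * W ^ (k - i)}

end

namespace LayeredGraph

variable (G : LayeredGraph) (F : Type) [Field F]

/-- One step along the distinguished edges: `v ↦ h(e_v)`. -/
def distStep (sel : G.V → G.E) (v : G.V) : G.V := G.head (sel v)

/-- `e(v,1) = e_{v⁽⁰⁾} + e_{v⁽¹⁾} + ⋯ + e_{v^{(|v|-1)}} ∈ FE`,
summed along the distinguished path from `v` to `*`. -/
noncomputable def eOne (sel : G.V → G.E) (v : G.V) : G.E →₀ F :=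
  ∑ i ∈ Finset.range (G.rank v), Finsupp.single (sel ((G.distStep sel)^[i] v)) (1 : F)

/-- The map `τ : FE → FE`, `f ↦ e(t(f),1) - e(h(f),1)`. -/
noncomputable def tauMap (sel : G.V → G.E) : (G.E →₀ F) →ₗ[F] (G.E →₀ F) :=
  Finsupp.lsum F fun e => LinearMap.toSpanSingleton F (G.E →₀ F)
    (G.eOne F sel (G.tail e) - G.eOne F sel (G.head e))

/-- The degree-one component `R₁` of the defining ideal `R`, spanned by the
differences `e(π₁,1) - e(π₂,1)` over paths with common tail and common head
(here `e(π,1) = -(e₁ + ⋯ + e_m)`). -/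
noncomputable def Rone : Submodule F (G.E →₀ F) :=
  Submodule.span F {x | ∃ π₁ π₂ : List G.E, G.IsPathList π₁ ∧ G.IsPathList π₂ ∧
    G.firstV π₁ = G.firstV π₂ ∧ G.lastV π₁ = G.lastV π₂ ∧
    x = (-1 : F) • (π₁.map fun e => Finsupp.single e (1 : F)).sum
      - (-1 : F) • (π₂.map fun e => Finsupp.single e (1 : F)).sum}

end LayeredGraph


namespace TauAux

open LayeredGraph Finsupp

variable {G : LayeredGraph} {F : Type} [Field F] {sel : G.V → G.E}

lemma list_range_sum {M : Type*} [AddCommMonoid M] (g : ℕ → M) (n : ℕ) :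
    ((List.range n).map g).sum = ∑ i ∈ Finset.range n, g i := by
  induction n with
  | zero => simp
  | succ n ih => rw [List.range_succ]; simp [ih, Finset.sum_range_succ]

lemma rank_distStep (hsel : ∀ v, G.rank v ≠ 0 → G.tail (sel v) = v)
    {v : G.V} (hv : G.rank v ≠ 0) :
    G.rank (G.distStep sel v) + 1 = G.rank v := by
  have h := G.rank_tail (sel v)
  rw [hsel v hv] at h
  simpa [LayeredGraph.distStep] using h.symm

lemma rank_iterate (hsel : ∀ v, G.rank v ≠ 0 → G.tail (sel v) = v) :
    ∀ (i : ℕ) (v : G.V), i ≤ G.rank v →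
      G.rank ((G.distStep sel)^[i] v) = G.rank v - i := by
  intro i
  induction i with
  | zero => simp
  | succ n ih =>
    intro v hv
    have h0 : G.rank v ≠ 0 := by omega
    have h1 := rank_distStep hsel h0
    rw [Function.iterate_succ_apply, ih (G.distStep sel v) (by omega)]
    omega

lemma eOne_rec (hsel : ∀ v, G.rank v ≠ 0 → G.tail (sel v) = v)
    {v : G.V} (hv : G.rank v ≠ 0) :
    G.eOne F sel v = Finsupp.single (sel v) (1 : F) + G.eOne F sel (G.distStep sel v) := by
  obtain ⟨n, hn⟩ : ∃ n, G.rank v = n + 1 := ⟨G.rank v - 1, by omega⟩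
  have hs : G.rank (G.distStep sel v) = n := by
    have := rank_distStep hsel hv; omega
  unfold LayeredGraph.eOne
  rw [hn, hs, Finset.sum_range_succ']
  simp only [Function.iterate_succ_apply, Function.iterate_zero_apply]
  rw [add_comm]

lemma tau_single (e : G.E) (b : F) :
    G.tauMap F sel (Finsupp.single e b) =
      b • (G.eOne F sel (G.tail e) - G.eOne F sel (G.head e)) := by
  simp [LayeredGraph.tauMap]

lemma tau_single_sel (hsel : ∀ v, G.rank v ≠ 0 → G.tail (sel v) = v)
    {v : G.V} (hv : G.rank v ≠ 0) :
    G.tauMap F sel (Finsupp.single (sel v) (1 : F)) = Finsupp.single (sel v) (1 : F) := by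
  rw [tau_single, hsel v hv, one_smul, eOne_rec hsel hv]
  simp only [LayeredGraph.distStep]
  abel

lemma tau_eOne (hsel : ∀ v, G.rank v ≠ 0 → G.tail (sel v) = v) (v : G.V) :
    G.tauMap F sel (G.eOne F sel v) = G.eOne F sel v := by
  unfold LayeredGraph.eOne
  rw [map_sum]
  refine Finset.sum_congr rfl fun i hi => ?_
  rw [Finset.mem_range] at hi
  have : G.rank ((G.distStep sel)^[i] v) = G.rank v - i := rank_iterate hsel i v (by omega)
  exact tau_single_sel hsel (by omega)

lemma tau_pathSum : ∀ (l : List G.E) (h : l ≠ []),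
    l.Chain' (fun e f => G.head e = G.tail f) →
    G.tauMap F sel ((l.map fun e => Finsupp.single e (1 : F)).sum) =
      G.eOne F sel (G.tail (l.head h)) - G.eOne F sel (G.head (l.getLast h))
  | [], h, _ => absurd rfl h
  | [a], _, _ => by simp [tau_single]
  | a :: b :: t, _, hc => by
    change List.IsChain _ _ at hc; rw [List.isChain_cons_cons] at hc
    have ih := tau_pathSum (b :: t) (by simp) hc.2
    simp only [List.map_cons, List.sum_cons] at ih ⊢
    rw [map_add, tau_single, one_smul, ih,
      List.getLast_cons (a := a) (l := b :: t) (by simp)]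
    simp only [List.head_cons]
    rw [hc.1]
    abel

/-- The distinguished path from `v` down to `*`. -/
def dpath (G : LayeredGraph) (sel : G.V → G.E) (v : G.V) : List G.E :=
  (List.range (G.rank v)).map fun i => sel ((G.distStep sel)^[i] v)

lemma dpath_sum (v : G.V) :
    ((dpath G sel v).map fun e => Finsupp.single e (1 : F)).sum = G.eOne F sel v := by
  rw [dpath, List.map_map, list_range_sum]
  rfl

lemma dpath_ne_nil {v : G.V} (hv : G.rank v ≠ 0) : dpath G sel v ≠ [] := by
  simp [dpath, List.range_eq_nil, hv]

lemma dpath_chain (hsel : ∀ v, G.rank v ≠ 0 → G.tail (sel v) = v) (v : G.V) :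
    (dpath G sel v).Chain' (fun e f => G.head e = G.tail f) := by
  rw [dpath]; change List.IsChain _ _; rw [List.isChain_map]
  rcases Nat.eq_zero_or_pos (G.rank v) with h | h
  · simp [h]
  · obtain ⟨n, hn⟩ : ∃ n, G.rank v = n + 1 := ⟨G.rank v - 1, by omega⟩
    rw [hn, List.isChain_range_succ]
    intro m hm
    have hr : G.rank ((G.distStep sel)^[m+1] v) = G.rank v - (m+1) :=
      rank_iterate hsel (m+1) v (by omega)
    have hne : G.rank ((G.distStep sel)^[m+1] v) ≠ 0 := by omega
    show G.head (sel ((G.distStep sel)^[m] v)) = G.tail (sel ((G.distStep sel)^[m+1] v))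
    rw [hsel _ hne, Function.iterate_succ_apply']
    rfl

lemma dpath_head (hsel : ∀ v, G.rank v ≠ 0 → G.tail (sel v) = v)
    {v : G.V} (hv : G.rank v ≠ 0) :
    (dpath G sel v).head? = some (sel v) := by
  obtain ⟨n, hn⟩ : ∃ n, G.rank v = n + 1 := ⟨G.rank v - 1, by omega⟩
  rw [dpath, hn, List.range_succ_eq_map]
  simp

lemma dpath_firstV (hsel : ∀ v, G.rank v ≠ 0 → G.tail (sel v) = v)
    {v : G.V} (hv : G.rank v ≠ 0) :
    G.firstV (dpath G sel v) = some v := by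
  rw [LayeredGraph.firstV, dpath_head hsel hv, Option.map_some, hsel v hv]

lemma dpath_lastV (hsel : ∀ v, G.rank v ≠ 0 → G.tail (sel v) = v)
    {v : G.V} (hv : G.rank v ≠ 0) :
    G.lastV (dpath G sel v) = some ((G.distStep sel)^[G.rank v] v) := by
  obtain ⟨n, hn⟩ : ∃ n, G.rank v = n + 1 := ⟨G.rank v - 1, by omega⟩
  rw [LayeredGraph.lastV, dpath, hn, List.range_succ, List.map_append]
  simp [Function.iterate_succ_apply']
  rfl

lemma rank_iterate_full (hsel : ∀ v, G.rank v ≠ 0 → G.tail (sel v) = v) (v : G.V) :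
    G.rank ((G.distStep sel)^[G.rank v] v) = 0 := by
  rw [rank_iterate hsel (G.rank v) v le_rfl]; omega

lemma single_sub_tau_mem (hmin : G.HasUniqueMin)
    (hsel : ∀ v, G.rank v ≠ 0 → G.tail (sel v) = v) (e : G.E) :
    Finsupp.single e (1 : F) - G.tauMap F sel (Finsupp.single e (1 : F)) ∈ G.Rone F := by
  obtain ⟨s, hs0, hsu⟩ := hmin
  have hte : G.rank (G.tail e) ≠ 0 := by have := G.rank_tail e; omega
  set π₁ : List G.E := e :: dpath G sel (G.head e) with hπ₁
  set π₂ : List G.E := dpath G sel (G.tail e) with hπ₂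
  have hp1 : G.IsPathList π₁ := by
    refine ⟨by simp [hπ₁], ?_⟩
    rw [hπ₁]; change List.IsChain _ _; rw [List.isChain_cons]
    refine ⟨fun b hb => ?_, dpath_chain hsel _⟩
    rcases Nat.eq_zero_or_pos (G.rank (G.head e)) with h | h
    · simp [dpath, List.range_eq_nil, h] at hb
    · rw [dpath_head hsel (by omega)] at hb
      simp only [Option.mem_def, Option.some.injEq] at hb
      rw [← hb, hsel _ (by omega)]
  have hp2 : G.IsPathList π₂ := ⟨dpath_ne_nil hte, dpath_chain hsel _⟩
  have hf1 : G.firstV π₁ = some (G.tail e) := by simp [hπ₁, LayeredGraph.firstV]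
  have hf2 : G.firstV π₂ = some (G.tail e) := dpath_firstV hsel hte
  have hl2 : G.lastV π₂ = some s := by
    rw [dpath_lastV hsel hte]
    exact congrArg Option.some (hsu _ (rank_iterate_full hsel _))
  have hl1 : G.lastV π₁ = some s := by
    rcases Nat.eq_zero_or_pos (G.rank (G.head e)) with h | h
    · have : dpath G sel (G.head e) = [] := by simp [dpath, List.range_eq_nil, h]
      rw [hπ₁, this]
      simp [LayeredGraph.lastV]
      exact hsu _ h
    · obtain ⟨x, t, hxt⟩ := List.exists_cons_of_ne_nil
        (dpath_ne_nil (G := G) (sel := sel) (v := G.head e) (by omega))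
      have h2 := dpath_lastV hsel (v := G.head e) (by omega)
      rw [hxt] at h2
      rw [hπ₁, hxt]
      unfold LayeredGraph.lastV at h2 ⊢
      rw [List.getLast?_cons_cons, h2]
      exact congrArg Option.some (hsu _ (rank_iterate_full hsel _))
  have hgen : ((-1 : F) • (π₁.map fun e => Finsupp.single e (1 : F)).sum
      - (-1 : F) • (π₂.map fun e => Finsupp.single e (1 : F)).sum) ∈ G.Rone F :=
    Submodule.subset_span ⟨π₁, π₂, hp1, hp2, hf1.trans hf2.symm, hl1.trans hl2.symm, rfl⟩
  have hsum1 : (π₁.map fun e => Finsupp.single e (1 : F)).sum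
      = Finsupp.single e (1 : F) + G.eOne F sel (G.head e) := by
    rw [hπ₁, List.map_cons, List.sum_cons, dpath_sum]
  have hsum2 : (π₂.map fun e => Finsupp.single e (1 : F)).sum = G.eOne F sel (G.tail e) :=
    dpath_sum _
  have := Submodule.neg_mem _ hgen
  rw [hsum1, hsum2, tau_single, one_smul] at *
  convert this using 1
  simp only [neg_sub, smul_add, neg_smul, one_smul]
  abel

lemma sub_tau_mem (hmin : G.HasUniqueMin)
    (hsel : ∀ v, G.rank v ≠ 0 → G.tail (sel v) = v) (f : G.E →₀ F) :
    f - G.tauMap F sel f ∈ G.Rone F := by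
  induction f using Finsupp.induction_linear with
  | zero => simp
  | add f g hf hg =>
    have : (f + g) - G.tauMap F sel (f + g) = (f - G.tauMap F sel f) + (g - G.tauMap F sel g) := by
      rw [map_add]; abel
    rw [this]; exact Submodule.add_mem _ hf hg
  | single a b =>
    have hb : Finsupp.single a b = b • Finsupp.single a (1 : F) := by
      rw [Finsupp.smul_single', mul_one]
    rw [hb, map_smul, ← smul_sub]
    exact Submodule.smul_mem _ _ (single_sub_tau_mem hmin hsel a)

lemma eOne_mem (hsel : ∀ v, G.rank v ≠ 0 → G.tail (sel v) = v) (v : G.V) :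
    G.eOne F sel v ∈ Submodule.span F
      {x | ∃ w, G.rank w ≠ 0 ∧ x = Finsupp.single (sel w) (1 : F)} := by
  unfold LayeredGraph.eOne
  refine Submodule.sum_mem _ fun i hi => Submodule.subset_span ?_
  rw [Finset.mem_range] at hi
  have : G.rank ((G.distStep sel)^[i] v) = G.rank v - i := rank_iterate hsel i v (by omega)
  exact ⟨_, by omega, rfl⟩

end TauAux

open TauAux in

/-- `τ : FE → FE`, `τ(f) = e(t(f),1) - e(h(f),1)`, is a projection
of `FE` onto `FE' = span{e_v : v ∈ V⁺}` whose kernel is `R₁`. -/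
theorem tau_projection_ker_Rone (G : LayeredGraph) (F : Type) [Field F]
    (hmin : G.HasUniqueMin) (hfull : G.EdgeFull)
    (sel : G.V → G.E) (hsel : ∀ v, G.rank v ≠ 0 → G.tail (sel v) = v) :
    (G.tauMap F sel) ∘ₗ (G.tauMap F sel) = G.tauMap F sel ∧
    LinearMap.range (G.tauMap F sel) =
      Submodule.span F {x | ∃ v, G.rank v ≠ 0 ∧ x = Finsupp.single (sel v) (1 : F)} ∧
    LinearMap.ker (G.tauMap F sel) = G.Rone F := by
  refine ⟨?_, le_antisymm ?_ ?_, le_antisymm ?_ ?_⟩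
  · apply LinearMap.ext
    intro f
    simp only [LinearMap.comp_apply]
    induction f using Finsupp.induction_linear with
    | zero => simp
    | add f g hf hg => simp only [map_add]; rw [hf, hg]
    | single a b =>
      rw [tau_single, map_smul, smul_sub, map_sub, tau_eOne hsel, tau_eOne hsel, ← smul_sub]
  · rintro x ⟨f, rfl⟩
    induction f using Finsupp.induction_linear with
    | zero => simp
    | add f g hf hg => rw [map_add]; exact Submodule.add_mem _ hf hg
    | single a b =>
      rw [tau_single]
      exact Submodule.smul_mem _ _
        (Submodule.sub_mem _ (eOne_mem hsel _) (eOne_mem hsel _))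
  · rw [Submodule.span_le]
    rintro x ⟨v, hv, rfl⟩
    exact ⟨Finsupp.single (sel v) 1, tau_single_sel hsel hv⟩
  · intro f hf
    rw [LinearMap.mem_ker] at hf
    have := sub_tau_mem hmin hsel f
    rwa [hf, sub_zero] at this
  · rw [LayeredGraph.Rone, Submodule.span_le]
    rintro x ⟨π₁, π₂, h1, h2, hfv, hlv, rfl⟩
    rw [SetLike.mem_coe, LinearMap.mem_ker, map_sub, map_smul, map_smul,
      tau_pathSum π₁ h1.1 h1.2, tau_pathSum π₂ h2.1 h2.2]
    have hfv' : G.tail (π₁.head h1.1) = G.tail (π₂.head h2.1) := by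
      rw [LayeredGraph.firstV, LayeredGraph.firstV,
        List.head?_eq_head h1.1, List.head?_eq_head h2.1] at hfv
      simpa using hfv
    have hlv' : G.head (π₁.getLast h1.1) = G.head (π₂.getLast h2.1) := by
      rw [LayeredGraph.lastV, LayeredGraph.lastV,
        List.getLast?_eq_getLast_of_ne_nil h1.1, List.getLast?_eq_getLast_of_ne_nil h2.1] at hlv
      simpa using hlv
    rw [hfv', hlv', sub_self]
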